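/- Let K be a compact topological space, M, N topological spaces, Ω ⊆ K × M open, f : Ω → N continuous, and Ω' := {γ ∈ C(K, M) : graph(γ) ⊆ Ω}. Then the map f_⋆ : Ω' → C(K, N), γ ↦ (x ↦ f(x, γ(x))), is continuous for the compact-open topologies. -/

import Mathlib

open Set

/-- For `L` compact and `W` open, the set of continuous maps whose graph over `L`
lies in `W` is open in the compact-open topology. -/
lemma graph_in_open_isOpen {K M : Type*} [TopologicalSpace K] [TopologicalSpace M]
    {L : Set K} (hL : IsCompact L) {W : Set (K × M)} (hW : IsOpen W) :
    IsOpen {γ : C(K, M) | ∀ x ∈ L, (x, γ x) ∈ W} := by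
  classical
  rw [isOpen_iff_forall_mem_open]
  intro γ₀ hγ₀
  -- for each point of `L`, choose a product neighborhood inside `W` respecting `γ₀`
  have h : ∀ x : L, ∃ A : Set K, ∃ B : Set M, IsOpen A ∧ IsOpen B ∧ (x : K) ∈ A ∧
      A ×ˢ B ⊆ W ∧ Set.MapsTo γ₀ A B := by
    rintro ⟨x, hx⟩
    obtain ⟨A, B, hA, hB, hxA, hxB, hAB⟩ := isOpen_prod_iff.1 hW x (γ₀ x) (hγ₀ x hx)
    refine ⟨A ∩ γ₀ ⁻¹' B, B, hA.inter (hB.preimage γ₀.continuous), hB, ⟨hxA, hxB⟩,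
      ?_, fun y hy => hy.2⟩
    exact fun p hp => hAB ⟨hp.1.1, hp.2⟩
  choose A B hA hB hxA hAB hmap using h
  obtain ⟨t, ht⟩ := hL.elim_finite_subcover A hA (fun x hx => mem_iUnion.2 ⟨⟨x, hx⟩, hxA _⟩)
  -- the open neighborhood of `γ₀`
  refine ⟨⋂ S ∈ t.powerset, {γ : C(K, M) |
      Set.MapsTo γ (L \ ⋃ j ∈ t \ S, A j) (⋃ i ∈ S, B i)}, ?_, ?_, ?_⟩
  · -- it is contained in the target set
    intro γ hγ x hx
    set S : Finset L := t.filter (fun i => x ∈ A i) with hS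
    have hγS := mem_iInter₂.1 hγ S (Finset.mem_powerset.2 (Finset.filter_subset _ _))
    have hxS : x ∈ L \ ⋃ j ∈ t \ S, A j := by
      refine ⟨hx, ?_⟩
      simp only [mem_iUnion, not_exists]
      rintro j hj hxj
      exact (Finset.mem_sdiff.1 hj).2 (Finset.mem_filter.2 ⟨(Finset.mem_sdiff.1 hj).1, hxj⟩)
    obtain ⟨i, hi, hγx⟩ := mem_iUnion₂.1 (hγS hxS)
    exact hAB i ⟨(Finset.mem_filter.1 hi).2, hγx⟩
  · -- it is open
    refine isOpen_biInter_finset fun S hS => ?_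
    refine ContinuousMap.isOpen_setOf_mapsTo (hL.diff ?_) (isOpen_biUnion fun i _ => hB i)
    exact isOpen_biUnion fun j _ => hA j
  · -- it contains `γ₀`
    refine mem_iInter₂.2 fun S hS => ?_
    intro x hx
    obtain ⟨i, hi, hxi⟩ := mem_iUnion₂.1 (ht hx.1)
    have hiS : i ∈ S := by
      by_contra hiS
      exact hx.2 (mem_iUnion₂.2 ⟨i, Finset.mem_sdiff.2 ⟨hi, hiS⟩, hxi⟩)
    exact mem_iUnion₂.2 ⟨i, hiS, hmap i hxi⟩

/-- Continuity (k = 0) case of Proposition fstar-gen: for compact `K`, open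
`Ω ⊆ K × M` and continuous `f : Ω → N`, the map `γ ↦ (x ↦ f (x, γ x))` is
continuous from `Ω' = {γ : graph γ ⊆ Ω}` to `C(K, N)`. -/
theorem stmt_16 {K M N : Type*} [TopologicalSpace K] [CompactSpace K]
    [TopologicalSpace M] [TopologicalSpace N]
    (Ω : Set (K × M)) (hΩ : IsOpen Ω) (f : Ω → N) (hf : Continuous f) :
    Continuous (fun γ : {γ : C(K, M) // ∀ x : K, (x, γ x) ∈ Ω} =>
      (⟨fun x => f ⟨(x, γ.1 x), γ.2 x⟩,
        hf.comp ((continuous_id.prodMk γ.1.continuous).subtype_mk γ.2)⟩ :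
        C(K, N))) := by
  rw [ContinuousMap.continuous_compactOpen]
  intro L hL U hU
  set W : Set (K × M) := {p | ∃ h : p ∈ Ω, f ⟨p, h⟩ ∈ U} with hWdef
  have hW : IsOpen W := by
    have : W = Subtype.val '' (f ⁻¹' U) := by
      ext p
      constructor
      · rintro ⟨h, hfU⟩; exact ⟨⟨p, h⟩, hfU, rfl⟩
      · rintro ⟨⟨q, hq⟩, hfU, rfl⟩; exact ⟨hq, hfU⟩
    rw [this]
    exact hΩ.isOpenMap_subtype_val _ (hU.preimage hf)
  have : {γ : {γ : C(K, M) // ∀ x : K, (x, γ x) ∈ Ω} |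
      Set.MapsTo (fun x => f ⟨(x, γ.1 x), γ.2 x⟩) L U} =
      Subtype.val ⁻¹' {γ : C(K, M) | ∀ x ∈ L, (x, γ x) ∈ W} := by
    ext γ
    simp only [mem_setOf_eq, mem_preimage]
    constructor
    · exact fun h x hx => ⟨γ.2 x, h hx⟩
    · rintro h x hx
      obtain ⟨hm, hfU⟩ := h x hx
      exact hfU
  exact this ▸ (graph_in_open_isOpen hL hW).preimage continuous_subtype_val
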